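/- For any small category X, any H : Xᵒᵖ × X ⥤ Type and any set S, there is a bijection, natural in S, between functions π₀(i_X H) → S from the set of connected components of the total category of the diagonal extension i_X H, and families of functions φ_x : H(x,x) → S (one for each object x of X) such that for every λ : x → y, a ∈ H(x,x) and b ∈ H(y,y) with H(id_x, λ)(a) = H(λ, id_y)(b), one has φ_x(a) = φ_y(b). (Thus π₀(i_X H) is the strong coend of H.) -/

import Mathlib

open CategoryTheory Opposite

universe u

section
variable {X : Type u} [Category.{u} X] (H : Xᵒᵖ × X ⥤ Type u)

lemma mapSnd_comp {x : Xᵒᵖ} {y y' y'' : X} (v : y ⟶ y') (w : y' ⟶ y'')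
    (z : H.obj (x, y)) :
    H.map ((𝟙 x, v ≫ w) : (x, y) ⟶ (x, y'')) z =
      H.map ((𝟙 x, w) : (x, y') ⟶ (x, y'')) (H.map ((𝟙 x, v) : (x, y) ⟶ (x, y')) z) := by
  have h : (((𝟙 x, v) : (x, y) ⟶ (x, y')) ≫ ((𝟙 x, w) : (x, y') ⟶ (x, y'')) :
      (x, y) ⟶ (x, y'')) = ((𝟙 x, v ≫ w) : (x, y) ⟶ (x, y'')) := by
    apply Prod.hom_ext
    · exact Category.comp_id (𝟙 x)
    · rfl
  rw [← h, Functor.map_comp]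
  rfl

lemma mapFst_comp {x x' x'' : Xᵒᵖ} {y : X} (u : x ⟶ x') (u' : x' ⟶ x'')
    (z : H.obj (x, y)) :
    H.map ((u ≫ u', 𝟙 y) : (x, y) ⟶ (x'', y)) z =
      H.map ((u', 𝟙 y) : (x', y) ⟶ (x'', y)) (H.map ((u, 𝟙 y) : (x, y) ⟶ (x', y)) z) := by
  have h : (((u, 𝟙 y) : (x, y) ⟶ (x', y)) ≫ ((u', 𝟙 y) : (x', y) ⟶ (x'', y)) :
      (x, y) ⟶ (x'', y)) = ((u ≫ u', 𝟙 y) : (x, y) ⟶ (x'', y)) := by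
    apply Prod.hom_ext
    · rfl
    · exact Category.comp_id (𝟙 y)
  rw [← h, Functor.map_comp]
  rfl

lemma map_exch {x x' : Xᵒᵖ} {y y' : X} (u : x ⟶ x') (v : y ⟶ y') (z : H.obj (x, y)) :
    H.map ((𝟙 x', v) : (x', y) ⟶ (x', y')) (H.map ((u, 𝟙 y) : (x, y) ⟶ (x', y)) z) =
      H.map ((u, 𝟙 y') : (x, y') ⟶ (x', y')) (H.map ((𝟙 x, v) : (x, y) ⟶ (x, y')) z) := by
  rw [← FunctorToTypes.map_comp_apply, ← FunctorToTypes.map_comp_apply]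
  simp

end

/-- The total category of the diagonal extension `i_X H` of `H : Xᵒᵖ × X ⥤ Type`:
objects over `x` are elements of `H(x,x)`; there is (at most one) morphism over
`λ : x → y` from `a` to `b` exactly when `H(id_x, λ)(a) = H(λ, id_y)(b)`. -/
structure DiagEl {X : Type u} [Category.{u} X] (H : Xᵒᵖ × X ⥤ Type u) : Type u where
  pt : X
  el : H.obj (op pt, pt)

instance {X : Type u} [Category.{u} X] (H : Xᵒᵖ × X ⥤ Type u) :
    Category.{u} (DiagEl H) where
  Hom s t := {l : s.pt ⟶ t.pt //
    H.map ((𝟙 (op s.pt), l) : (op s.pt, s.pt) ⟶ (op s.pt, t.pt)) s.el =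
    H.map ((l.op, 𝟙 t.pt) : (op t.pt, t.pt) ⟶ (op s.pt, t.pt)) t.el}
  id s := ⟨𝟙 s.pt, by simp⟩
  comp {s t r} f g := ⟨f.1 ≫ g.1, by
    rw [mapSnd_comp, f.2, map_exch, g.2,
      show ((f.1 ≫ g.1).op : op r.pt ⟶ op s.pt) = g.1.op ≫ f.1.op from by simp,
      mapFst_comp]⟩
  id_comp := by intros; apply Subtype.ext; simp
  comp_id := by intros; apply Subtype.ext; simp
  assoc := by intros; apply Subtype.ext; simp

/-- The projection of the diagonal extension to `X`. -/
@[simps]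
def DiagEl.π {X : Type u} [Category.{u} X] (H : Xᵒᵖ × X ⥤ Type u) : DiagEl H ⥤ X where
  obj s := s.pt
  map f := f.1
  map_id := by intros; rfl
  map_comp := by intros; rfl

/-- Strongly dinatural families from `H` to the constant functor at `S`:
families `φ_x : H(x,x) → S` compatible with the diagonal extension's morphisms. -/
def StrongDinatToConst {X : Type u} [Category.{u} X] (H : Xᵒᵖ × X ⥤ Type u)
    (S : Type u) : Type u :=
  {φ : ∀ x : X, H.obj (op x, x) → S //
    ∀ {x y : X} (l : x ⟶ y) (a : H.obj (op x, x)) (b : H.obj (op y, y)),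
      H.map ((𝟙 (op x), l) : (op x, x) ⟶ (op x, y)) a =
        H.map ((l.op, 𝟙 y) : (op y, y) ⟶ (op x, y)) b → φ x a = φ y b}

/-- for any `H : Xᵒᵖ × X ⥤ Type` and any set `S`, functions
`π₀(i_X H) → S` out of the connected components of the diagonal extension
correspond bijectively, naturally in `S`, to strongly dinatural families
`φ_x : H(x,x) → S`; thus `π₀(i_X H)` is the strong coend of `H`. -/
theorem pi0_diagEl_is_strong_coend (X : Type u) [Category.{u} X]
    (H : Xᵒᵖ × X ⥤ Type u) :
    ∃ e : ∀ S : Type u, (ConnectedComponents (DiagEl H) → S) ≃ StrongDinatToConst H S,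
      ∀ (S S' : Type u) (g : S → S') (k : ConnectedComponents (DiagEl H) → S),
        ((e S' (g ∘ k)).1 : ∀ x : X, H.obj (op x, x) → S') =
          fun x a => g (((e S k).1 : ∀ x : X, H.obj (op x, x) → S) x a) := by
  classical
  have key : ∀ (S : Type u) (φ : StrongDinatToConst H S) (s t : DiagEl H),
      Zigzag s t → φ.1 s.pt s.el = φ.1 t.pt t.el := by
    intro S φ s t h
    induction h with
    | refl => rfl
    | tail _ h ih =>
      rw [ih]
      rcases h with ⟨⟨f⟩⟩ | ⟨⟨f⟩⟩
      · exact φ.2 f.1 _ _ f.2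
      · exact (φ.2 f.1 _ _ f.2).symm
  refine ⟨fun S => {
    toFun := fun k => ⟨fun x a => k (Quotient.mk _ ⟨x, a⟩), fun {x y} l a b h =>
      congrArg k (Quotient.sound (Relation.ReflTransGen.single (Or.inl ⟨⟨l, h⟩⟩)))⟩
    invFun := fun φ => Quotient.lift (fun s : DiagEl H => φ.1 s.pt s.el)
      (fun s t h => key S φ s t h)
    left_inv := fun k => by
      funext c
      induction c using Quotient.ind
      rfl
    right_inv := fun φ => rfl }, fun S S' g k => rfl⟩
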